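/- arXiv:2307.03335 — 3 statements merged into one kernel-verified Lean document; each statement's English description precedes it below -/
import Mathlib

section
/- Consider affine constraints g_i(y) = ⟨a_i, y⟩ + b_i for i = 1,…,m, and let x ∈ ℝⁿ be feasible (g_i(x) ≤ 0 for all i). Fix ε₀ > 0 and let A := { i : max(−g_i(x),0) ≤ ε₀‖a_i‖ } be the active set; let G be the n×|A| matrix whose columns are (a_i)_{i∈A}, assume GᵀMMᵀG is positive definite, and set Z := I_d − MᵀG(GᵀMMᵀG)⁻¹GᵀM. Let v ∈ ℝⁿ with ‖v‖ ≤ U_f (U_f > 0), and suppose ε > 0 satisfies ‖Mᵀa_i‖ ≤ √(d(1+ε)/n²)·‖a_i‖ for every i ∉ A and ‖Mᵀv‖ ≤ √(d(1+ε)/n²)·U_f. If 0 ≤ α ≤ ε₀·n²/((1+ε)·d·U_f), then x⁺ := x − α·M Z Mᵀv is feasible: g_i(x⁺) ≤ 0 for all i = 1,…,m; moreover g_i(x⁺) = g_i(x) for every i ∈ A. -/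
open Matrix InnerProductSpace

/-- Apply a real matrix to a vector of the corresponding Euclidean space. -/
noncomputable def mulVecE {m n : Type*} [Fintype n] (A : Matrix m n ℝ)
    (v : EuclideanSpace ℝ n) : EuclideanSpace ℝ m :=
  (WithLp.equiv 2 (m → ℝ)).symm (A.mulVec ((WithLp.equiv 2 (n → ℝ)) v))

/-- `Z = I - MᵀG(GᵀMMᵀG)⁻¹GᵀM`. -/
noncomputable def Zmat {n d s : Type*} [Fintype n] [Fintype d] [DecidableEq d] [Fintype s]
    [DecidableEq s] (M : Matrix n d ℝ) (G : Matrix n s ℝ) : Matrix d d ℝ :=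
  1 - Mᵀ * G * (Gᵀ * M * Mᵀ * G)⁻¹ * Gᵀ * M

/-- `λ(v) = -(GᵀMMᵀG)⁻¹GᵀMMᵀv`. -/
noncomputable def lamVec {n d s : Type*} [Fintype n] [Fintype d] [Fintype s] [DecidableEq s]
    (M : Matrix n d ℝ) (G : Matrix n s ℝ) (v : EuclideanSpace ℝ n) : EuclideanSpace ℝ s :=
  -(mulVecE ((Gᵀ * M * Mᵀ * G)⁻¹ * Gᵀ * M * Mᵀ) v)

/-- Componentwise positive part `[a]₊`. -/
noncomputable def posPartE {s : Type*} (a : EuclideanSpace ℝ s) : EuclideanSpace ℝ s :=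
  (WithLp.equiv 2 (s → ℝ)).symm (fun i => max ((WithLp.equiv 2 (s → ℝ)) a i) 0)

/-- Smallest eigenvalue of a (symmetric) real matrix. -/
noncomputable def lambdaMin {s : Type*} [Fintype s] (A : Matrix s s ℝ) : ℝ :=
  sInf {r : ℝ | ∃ v : s → ℝ, v ≠ 0 ∧ A.mulVec v = r • v}

lemma mulVecE_mulVecE {p q r : Type*} [Fintype q] [Fintype r] (A : Matrix p q ℝ) (B : Matrix q r ℝ)
    (u : EuclideanSpace ℝ r) : mulVecE A (mulVecE B u) = mulVecE (A*B) u := by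
  simp [mulVecE, Matrix.mulVec_mulVec]

lemma inner_mulVecE {p q : Type*} [Fintype p] [Fintype q] (A : Matrix p q ℝ)
    (w : EuclideanSpace ℝ p) (u : EuclideanSpace ℝ q) :
    ⟪w, mulVecE A u⟫_ℝ = ⟪mulVecE Aᵀ w, u⟫_ℝ := by
  simp only [mulVecE, PiLp.inner_apply, RCLike.inner_apply, conj_trivial,
    WithLp.equiv_symm_apply, PiLp.toLp_apply, Matrix.mulVec, dotProduct, Matrix.transpose_apply,
    Finset.mul_sum, Finset.sum_mul, WithLp.equiv_apply]
  rw [Finset.sum_comm]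
  exact Finset.sum_congr rfl fun i _ => Finset.sum_congr rfl fun j _ => by ring

section MatAlg
variable {n d s : Type*} [Fintype n] [Fintype d] [DecidableEq d] [Fintype s] [DecidableEq s]
  (M : Matrix n d ℝ) (G : Matrix n s ℝ)

lemma GMZ_eq_zero (hpd : (Gᵀ * M * Mᵀ * G).PosDef) : Gᵀ * M * Zmat M G = 0 := by
  have hdet : IsUnit (Gᵀ * M * Mᵀ * G).det := (Matrix.isUnit_iff_isUnit_det _).mp hpd.isUnit
  unfold Zmat
  rw [Matrix.mul_sub, Matrix.mul_one]
  simp only [← Matrix.mul_assoc]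
  rw [Matrix.mul_nonsing_inv _ hdet, Matrix.one_mul, sub_self]

lemma Zmat_transpose : (Zmat M G)ᵀ = Zmat M G := by
  have hB : (Gᵀ * M * Mᵀ * G)ᵀ = Gᵀ * M * Mᵀ * G := by
    simp [Matrix.transpose_mul, Matrix.mul_assoc]
  unfold Zmat
  rw [Matrix.transpose_sub, Matrix.transpose_one]
  congr 1
  simp only [Matrix.transpose_mul, Matrix.transpose_transpose, Matrix.transpose_nonsing_inv, hB]
  simp [Matrix.mul_assoc]

lemma Zmat_idem (hpd : (Gᵀ * M * Mᵀ * G).PosDef) : Zmat M G * Zmat M G = Zmat M G := by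
  have hdet : IsUnit (Gᵀ * M * Mᵀ * G).det := (Matrix.isUnit_iff_isUnit_det _).mp hpd.isUnit
  have h0 := GMZ_eq_zero M G hpd
  nth_rewrite 1 [Zmat]
  rw [Matrix.sub_mul, Matrix.one_mul]
  have : Mᵀ * G * (Gᵀ * M * Mᵀ * G)⁻¹ * Gᵀ * M * Zmat M G = 0 := by
    calc Mᵀ * G * (Gᵀ * M * Mᵀ * G)⁻¹ * Gᵀ * M * Zmat M G
        = Mᵀ * G * (Gᵀ * M * Mᵀ * G)⁻¹ * (Gᵀ * M * Zmat M G) := by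
          simp only [Matrix.mul_assoc]
      _ = 0 := by rw [h0, Matrix.mul_zero]
  rw [this, sub_zero]

end MatAlg

lemma norm_Zmat_mulVecE_le {n d s : Type*} [Fintype n] [Fintype d] [DecidableEq d] [Fintype s]
    [DecidableEq s] (M : Matrix n d ℝ) (G : Matrix n s ℝ) (hpd : (Gᵀ * M * Mᵀ * G).PosDef)
    (u : EuclideanSpace ℝ d) : ‖mulVecE (Zmat M G) u‖ ≤ ‖u‖ := by
  set y := mulVecE (Zmat M G) u with hy
  have h1 : ⟪y, y⟫_ℝ = ⟪y, u⟫_ℝ := by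
    have := inner_mulVecE (Zmat M G) y u
    rw [hy] at this ⊢
    rw [this, mulVecE_mulVecE, Zmat_transpose, Zmat_idem M G hpd]
  have h2 : ‖y‖ ^ 2 ≤ ‖y‖ * ‖u‖ := by
    rw [← real_inner_self_eq_norm_sq, h1]
    exact real_inner_le_norm y u
  rcases eq_or_lt_of_le (norm_nonneg y) with h | h
  · rw [← h]; positivity
  · nlinarith

theorem stmt6 {n d m : ℕ} (hn : 0 < n) (hd : 0 < d) (hm : 0 < m)
    (M : Matrix (Fin n) (Fin d) ℝ)
    (a : Fin m → EuclideanSpace ℝ (Fin n)) (b : Fin m → ℝ)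
    (g : Fin m → EuclideanSpace ℝ (Fin n) → ℝ)
    (hg : ∀ i y, g i y = ⟪a i, y⟫_ℝ + b i)
    (x : EuclideanSpace ℝ (Fin n)) (hfeas : ∀ i, g i x ≤ 0)
    (ε₀ : ℝ) (hε₀ : 0 < ε₀)
    (A : Finset (Fin m))
    (hA : ∀ i, i ∈ A ↔ max (-(g i x)) 0 ≤ ε₀ * ‖a i‖)
    (G : Matrix (Fin n) (↥A) ℝ)
    (hG : ∀ (i : Fin n) (j : ↥A), G i j = (WithLp.equiv 2 (Fin n → ℝ)) (a j) i)
    (hpd : (Gᵀ * M * Mᵀ * G).PosDef)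
    (v : EuclideanSpace ℝ (Fin n)) (Uf : ℝ) (hUf : 0 < Uf) (hv : ‖v‖ ≤ Uf)
    (ε : ℝ) (hε : 0 < ε)
    (hMa : ∀ i ∉ A, ‖mulVecE Mᵀ (a i)‖ ≤ Real.sqrt ((d * (1 + ε)) / n ^ 2) * ‖a i‖)
    (hMv : ‖mulVecE Mᵀ v‖ ≤ Real.sqrt ((d * (1 + ε)) / n ^ 2) * Uf)
    (α : ℝ) (hα0 : 0 ≤ α) (hα1 : α ≤ ε₀ * n ^ 2 / ((1 + ε) * d * Uf)) :
    (∀ i, g i (x - α • mulVecE M (mulVecE (Zmat M G) (mulVecE Mᵀ v))) ≤ 0) ∧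
    (∀ i ∈ A, g i (x - α • mulVecE M (mulVecE (Zmat M G) (mulVecE Mᵀ v))) = g i x) := by
  set w := mulVecE M (mulVecE (Zmat M G) (mulVecE Mᵀ v)) with hw
  have hgw : ∀ i, g i (x - α • w) = g i x - α * ⟪a i, w⟫_ℝ := by
    intro i
    rw [hg, hg, inner_sub_right, real_inner_smul_right]
    ring
  have hZ0 : (Zmat M G)ᵀ * Mᵀ * G = 0 := by
    have h1 := GMZ_eq_zero M G hpd
    have h2 : (Gᵀ * M * Zmat M G)ᵀ = (0 : Matrix (↥A) (Fin d) ℝ)ᵀ := by rw [h1]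
    simpa [Matrix.transpose_mul, Matrix.mul_assoc] using h2
  have hinA : ∀ i ∈ A, ⟪a i, w⟫_ℝ = 0 := by
    intro i hi
    have hai : a i = mulVecE G (EuclideanSpace.single ⟨i, hi⟩ 1) := by
      ext k
      simp [mulVecE, Matrix.mulVec, dotProduct, EuclideanSpace.single_apply, mul_ite,
        Finset.sum_ite_eq', hG k ⟨i, hi⟩]
    rw [hw, inner_mulVecE, inner_mulVecE, hai, mulVecE_mulVecE, mulVecE_mulVecE, hZ0]
    simp [mulVecE, Matrix.col_apply', PiLp.inner_apply]
  constructor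
  · intro i
    by_cases hi : i ∈ A
    · rw [hgw, hinA i hi, mul_zero, sub_zero]; exact hfeas i
    · -- inactive constraint
      have hK : (0:ℝ) ≤ ‖a i‖ := norm_nonneg _
      have hgi : ε₀ * ‖a i‖ < -(g i x) := by
        have h1 : ¬ (max (-(g i x)) 0 ≤ ε₀ * ‖a i‖) := fun h => hi ((hA i).mpr h)
        have h2 : -(g i x) = max (-(g i x)) 0 := (max_eq_left (by linarith [hfeas i])).symm
        rw [h2]; exact lt_of_not_ge h1
      set c := Real.sqrt ((d * (1 + ε)) / n ^ 2) with hc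
      have hcc : c * c = (d * (1 + ε)) / n ^ 2 := Real.mul_self_sqrt (by positivity)
      have hZle : ‖mulVecE (Zmat M G) (mulVecE Mᵀ v)‖ ≤ c * Uf :=
        le_trans (norm_Zmat_mulVecE_le M G hpd _) hMv
      have hib : |⟪a i, w⟫_ℝ| ≤ (c * ‖a i‖) * (c * Uf) := by
        rw [hw, inner_mulVecE]
        refine le_trans (abs_real_inner_le_norm _ _) ?_
        exact mul_le_mul (hMa i hi) hZle (norm_nonneg _) (by positivity)
      have hib2 : -⟪a i, w⟫_ℝ ≤ (d * (1 + ε)) / n ^ 2 * ‖a i‖ * Uf := by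
        have he : c * ‖a i‖ * (c * Uf) = (c * c) * ‖a i‖ * Uf := by ring
        rw [hcc] at he
        have h1 := neg_abs_le (⟪a i, w⟫_ℝ)
        linarith [hib]
      have hn2 : (0:ℝ) < (n:ℝ) ^ 2 := by positivity
      have hdpos : (0:ℝ) < (d:ℝ) := Nat.cast_pos.mpr hd
      have hden : (0:ℝ) < (1 + ε) * d * Uf := by positivity
      have hαd : α * ((1 + ε) * d * Uf) ≤ ε₀ * n ^ 2 := (le_div_iff₀ hden).mp hα1
      have hα2 : α * ((d * (1 + ε)) / n ^ 2 * Uf) ≤ ε₀ := by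
        rw [show α * ((d * (1 + ε)) / n ^ 2 * Uf) = (α * ((1 + ε) * d * Uf)) / n ^ 2 by ring,
          div_le_iff₀ hn2]
        nlinarith
      rw [hgw]
      have h3 : α * (-⟪a i, w⟫_ℝ) ≤ α * ((d * (1 + ε)) / n ^ 2 * ‖a i‖ * Uf) :=
        mul_le_mul_of_nonneg_left hib2 hα0
      nlinarith [mul_le_mul_of_nonneg_right hα2 hK]
  · intro i hi
    rw [hgw, hinA i hi, mul_zero, sub_zero]
end

section
/- Let M be an n×d real matrix and G an n×s real matrix with GᵀMMᵀG positive definite. Let v ∈ ℝⁿ with Mᵀv ≠ 0 and σ ∈ ℝ^s nonzero; set μ := 1/(2√(σᵀ(GᵀMMᵀG)⁻¹σ)), Z := I_d − MᵀG(GᵀMMᵀG)⁻¹GᵀM, R' := MᵀG·((G − μ·(v σᵀ)/‖Mᵀv‖)ᵀMMᵀG)⁻¹·(G − μ·(v σᵀ)/‖Mᵀv‖)ᵀM, and R := I_d − R'. Then ‖Z Mᵀv‖² ≤ ‖R Mᵀv‖² ≤ 2·‖Z Mᵀv‖². -/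
open Matrix InnerProductSpace

lemma normE_sq {m : Type*} [Fintype m] (x : EuclideanSpace ℝ m) :
    ‖x‖ ^ 2 = (WithLp.equiv 2 (m → ℝ)) x ⬝ᵥ (WithLp.equiv 2 (m → ℝ)) x := by
  rw [← real_inner_self_eq_norm_sq]
  simp [PiLp.inner_apply, dotProduct, RCLike.inner_apply]
  rw [EuclideanSpace.norm_eq, Real.sq_sqrt (by positivity)]
  simp [sq]

lemma innerE_eq {m : Type*} [Fintype m] (x y : EuclideanSpace ℝ m) :
    ⟪x, y⟫_ℝ = (WithLp.equiv 2 (m → ℝ)) x ⬝ᵥ (WithLp.equiv 2 (m → ℝ)) y := by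
  simp [PiLp.inner_apply, dotProduct, RCLike.inner_apply]
  exact Finset.sum_congr rfl fun _ _ => mul_comm _ _

lemma equiv_mulVecE {m k : Type*} [Fintype k] (A : Matrix m k ℝ) (x : EuclideanSpace ℝ k) :
    (WithLp.equiv 2 (m → ℝ)) (mulVecE A x) = A *ᵥ ((WithLp.equiv 2 (k → ℝ)) x) := rfl

lemma dot_transpose {k l : Type*} [Fintype k] [Fintype l] (B : Matrix k l ℝ) (x : l → ℝ)
    (z : k → ℝ) : (B *ᵥ x) ⬝ᵥ z = x ⬝ᵥ (Bᵀ *ᵥ z) := by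
  rw [dotProduct_comm, dotProduct_mulVec, dotProduct_comm, mulVec_transpose]

lemma vecMulVec_mulVec' {k l : Type*} [Fintype l] (a : k → ℝ) (b x : l → ℝ) :
    vecMulVec a b *ᵥ x = (b ⬝ᵥ x) • a := by
  ext i; simp [vecMulVec, mulVec, dotProduct, Finset.mul_sum, mul_assoc, mul_comm, mul_left_comm]

lemma vecMulVec_transpose' {k l : Type*} (a : k → ℝ) (b : l → ℝ) :
    (vecMulVec a b)ᵀ = vecMulVec b a := by
  ext i j; simp [vecMulVec, mul_comm]

lemma smul_vecMulVec' {k l : Type*} (c : ℝ) (a : k → ℝ) (b : l → ℝ) :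
    c • vecMulVec a b = vecMulVec (c • a) b := by
  ext i j; simp [vecMulVec, mul_assoc]

lemma vecMulVec_mul' {k l r : Type*} [Fintype l] (a : k → ℝ) (b : l → ℝ) (N : Matrix l r ℝ) :
    vecMulVec a b * N = vecMulVec a (Nᵀ *ᵥ b) := by
  ext i j
  simp only [vecMulVec, mul_apply, mulVec, dotProduct, of_apply, transpose_apply, Finset.mul_sum]
  exact Finset.sum_congr rfl fun _ _ => by ring

lemma mul_vecMulVec' {k l r : Type*} [Fintype k] (N : Matrix r k ℝ) (a : k → ℝ) (b : l → ℝ) :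
    N * vecMulVec a b = vecMulVec (N *ᵥ a) b := by
  ext i j
  simp only [vecMulVec, mul_apply, mulVec, dotProduct, of_apply, Finset.sum_mul]
  exact Finset.sum_congr rfl fun _ _ => by ring

lemma dot_self_nonneg' {k : Type*} [Fintype k] (x : k → ℝ) : 0 ≤ x ⬝ᵥ x := by
  simp only [dotProduct, ← sq]
  positivity

lemma dot_sq_le {k : Type*} [Fintype k] (x y : k → ℝ) :
    (x ⬝ᵥ y) ^ 2 ≤ (x ⬝ᵥ x) * (y ⬝ᵥ y) := by
  simpa [dotProduct, sq] using Finset.sum_mul_sq_le_sq_mul_sq Finset.univ x y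

set_option maxHeartbeats 1600000 in
theorem stmt15 {n d s : ℕ} (hn : 0 < n) (hd : 0 < d) (hs : 0 < s)
    (M : Matrix (Fin n) (Fin d) ℝ) (G : Matrix (Fin n) (Fin s) ℝ)
    (hpd : (Gᵀ * M * Mᵀ * G).PosDef)
    (v : EuclideanSpace ℝ (Fin n)) (hv : mulVecE Mᵀ v ≠ 0)
    (σ : EuclideanSpace ℝ (Fin s)) (hσ : σ ≠ 0)
    (μ : ℝ) (hμ : μ = 1 / (2 * Real.sqrt ⟪σ, mulVecE ((Gᵀ * M * Mᵀ * G)⁻¹) σ⟫_ℝ))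
    (R' : Matrix (Fin d) (Fin d) ℝ)
    (hR' : R' = Mᵀ * G *
        ((G - (μ / ‖mulVecE Mᵀ v‖) •
            vecMulVec ((WithLp.equiv 2 (Fin n → ℝ)) v) ((WithLp.equiv 2 (Fin s → ℝ)) σ))ᵀ
          * M * Mᵀ * G)⁻¹ *
        (G - (μ / ‖mulVecE Mᵀ v‖) •
            vecMulVec ((WithLp.equiv 2 (Fin n → ℝ)) v) ((WithLp.equiv 2 (Fin s → ℝ)) σ))ᵀ * M)
    (R : Matrix (Fin d) (Fin d) ℝ) (hR : R = 1 - R') :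
    ‖mulVecE (Zmat M G) (mulVecE Mᵀ v)‖ ^ 2 ≤ ‖mulVecE R (mulVecE Mᵀ v)‖ ^ 2 ∧
    ‖mulVecE R (mulVecE Mᵀ v)‖ ^ 2 ≤ 2 * ‖mulVecE (Zmat M G) (mulVecE Mᵀ v)‖ ^ 2 := by
  classical
  set v' : Fin n → ℝ := (WithLp.equiv 2 (Fin n → ℝ)) v with hv'def
  set σ' : Fin s → ℝ := (WithLp.equiv 2 (Fin s → ℝ)) σ with hσ'def
  set A : Matrix (Fin s) (Fin s) ℝ := Gᵀ * M * Mᵀ * G with hAdef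
  set nw : ℝ := ‖mulVecE Mᵀ v‖ with hnwdef
  set c : ℝ := μ / nw with hcdef
  set w : Fin d → ℝ := Mᵀ *ᵥ v' with hwdef
  set g : Fin s → ℝ := (Gᵀ * M * Mᵀ) *ᵥ v' with hgdef
  set q : ℝ := σ' ⬝ᵥ (A⁻¹ *ᵥ σ') with hqdef
  set P : ℝ := g ⬝ᵥ (A⁻¹ *ᵥ g) with hPdef
  set S : ℝ := g ⬝ᵥ (A⁻¹ *ᵥ σ') with hSdef
  -- basic facts on A
  have hdetA : IsUnit A.det := isUnit_iff_ne_zero.mpr hpd.det_pos.ne'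
  have hAAi : A * A⁻¹ = 1 := Matrix.mul_nonsing_inv _ hdetA
  have hAiA : A⁻¹ * A = 1 := Matrix.nonsing_inv_mul _ hdetA
  have hAT : Aᵀ = A := by
    rw [hAdef]; simp [Matrix.transpose_mul, Matrix.mul_assoc]
  have hAiT : A⁻¹ᵀ = A⁻¹ := by rw [Matrix.transpose_nonsing_inv, hAT]
  have hAcan : ∀ x : Fin s → ℝ, A *ᵥ (A⁻¹ *ᵥ x) = x := fun x => by
    rw [mulVec_mulVec, hAAi, one_mulVec]
  -- positivity of q
  have hσ'0 : σ' ≠ 0 := by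
    intro h
    exact hσ (by simpa [hσ'def] using congrArg (WithLp.equiv 2 (Fin s → ℝ)).symm h)
  have hq_pos : 0 < q := by
    have := hpd.inv.dotProduct_mulVec_pos hσ'0
    simpa [hqdef, star_trivial] using this
  have hnw_pos : 0 < nw := norm_pos_iff.mpr hv
  have hww : w ⬝ᵥ w = nw ^ 2 := by
    rw [hwdef, hv'def, hnwdef, normE_sq, equiv_mulVecE]
  have hμval : μ = 1 / (2 * Real.sqrt q) := by
    rw [hμ, innerE_eq, equiv_mulVecE, ← hσ'def, ← hqdef]
  have hsqrtq : Real.sqrt q > 0 := Real.sqrt_pos.mpr hq_pos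
  have hμ_pos : 0 < μ := by
    rw [hμval]
    exact one_div_pos.mpr (mul_pos two_pos hsqrtq)
  have hμ2q : μ ^ 2 * q = 1 / 4 := by
    have hsq : Real.sqrt q ^ 2 = q := Real.sq_sqrt hq_pos.le
    rw [hμval, div_pow, one_pow, mul_pow, hsq]
    have hq0 : q ≠ 0 := hq_pos.ne'
    field_simp
    ring
  -- key vectors
  set m' : Fin d → ℝ := (Mᵀ * G) *ᵥ (A⁻¹ *ᵥ g) with hm'def
  set y : Fin d → ℝ := (Mᵀ * G) *ᵥ (A⁻¹ *ᵥ σ') with hydef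
  have hgw : (Gᵀ * M) *ᵥ w = g := by rw [hwdef, mulVec_mulVec]
  have hMGdot : ∀ x z : Fin s → ℝ,
      ((Mᵀ * G) *ᵥ x) ⬝ᵥ ((Mᵀ * G) *ᵥ z) = x ⬝ᵥ (A *ᵥ z) := by
    intro x z
    rw [dot_transpose, mulVec_mulVec, Matrix.transpose_mul, Matrix.transpose_transpose]
    rw [show Gᵀ * M * (Mᵀ * G) = A by rw [hAdef, Matrix.mul_assoc (Gᵀ * M) Mᵀ G]]
  have hmm : m' ⬝ᵥ m' = P := by
    rw [hm'def, hMGdot, hAcan, dotProduct_comm, hPdef]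
  have hyy : y ⬝ᵥ y = q := by
    rw [hydef, hMGdot, hAcan, dotProduct_comm, hqdef]
  have hsym : ∀ a b : Fin s → ℝ, (A⁻¹ *ᵥ a) ⬝ᵥ b = a ⬝ᵥ (A⁻¹ *ᵥ b) := by
    intro a b
    rw [dot_transpose, hAiT]
  have hmy : m' ⬝ᵥ y = S := by
    rw [hm'def, hydef, hMGdot, hAcan, hsym, hSdef]
  have hS2 : S ^ 2 ≤ P * q := by rw [← hmm, ← hyy, ← hmy]; exact dot_sq_le m' y
  have hPnn : 0 ≤ P := hmm ▸ dot_self_nonneg' m'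
  -- projection vector Zw
  set Zw : Fin d → ℝ := w - m' with hZwdef
  have hmw : m' ⬝ᵥ w = P := by
    rw [hm'def, dot_transpose, Matrix.transpose_mul, Matrix.transpose_transpose]
    rw [hgw, dotProduct_comm, hPdef]
  have hyw : y ⬝ᵥ w = S := by
    rw [hydef, dot_transpose, Matrix.transpose_mul, Matrix.transpose_transpose]
    rw [hgw, dotProduct_comm, hSdef]
  have hZZ : Zw ⬝ᵥ Zw = nw ^ 2 - P := by
    rw [hZwdef]
    rw [sub_dotProduct, dotProduct_sub, dotProduct_sub, hww, hmm,
      dotProduct_comm w m', hmw]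
    ring
  have hZnn : 0 ≤ nw ^ 2 - P := hZZ ▸ dot_self_nonneg' Zw
  have horth : Zw ⬝ᵥ y = 0 := by
    rw [hZwdef, sub_dotProduct, dotProduct_comm w y, hyw, hmy, sub_self]
  -- the perturbed matrix B
  set Bm : Matrix (Fin s) (Fin s) ℝ := A - c • vecMulVec σ' g with hBmdef
  have hBdef : (G - c • vecMulVec v' σ')ᵀ * M * Mᵀ * G = Bm := by
    have hX : vecMulVec σ' v' * M * Mᵀ * G = vecMulVec σ' g := by
      rw [vecMulVec_mul', vecMulVec_mul', vecMulVec_mul']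
      rw [Matrix.transpose_transpose, mulVec_mulVec, mulVec_mulVec, ← hgdef]
    calc (G - c • vecMulVec v' σ')ᵀ * M * Mᵀ * G
        = Gᵀ * M * Mᵀ * G - c • (vecMulVec σ' v' * M * Mᵀ * G) := by
          rw [Matrix.transpose_sub, Matrix.transpose_smul, vecMulVec_transpose',
            Matrix.sub_mul, Matrix.sub_mul, Matrix.sub_mul,
            Matrix.smul_mul, Matrix.smul_mul, Matrix.smul_mul]
      _ = A - c • vecMulVec σ' g := by rw [hX, ← hAdef]
      _ = Bm := by rw [hBmdef]
  -- bound on c * S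
  have hcS : (c * S) ^ 2 ≤ 1 / 4 := by
    have h1 : (c * S) ^ 2 = μ ^ 2 * S ^ 2 / nw ^ 2 := by
      rw [hcdef]; field_simp
    have h2 : μ ^ 2 * S ^ 2 / nw ^ 2 ≤ μ ^ 2 * (P * q) / nw ^ 2 := by
      gcongr <;> first
        | exact sq_nonneg μ
        | exact hS2
        | exact mul_pos four_pos (pow_pos hnw_pos 2)
    have h3 : μ ^ 2 * (P * q) / nw ^ 2 = P / (4 * nw ^ 2) := by
      have : μ ^ 2 * (P * q) = (μ ^ 2 * q) * P := by ring
      rw [this, hμ2q]; ring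
    have h4 : P / (4 * nw ^ 2) ≤ nw ^ 2 / (4 * nw ^ 2) := by
      gcongr <;> first
        | exact mul_pos four_pos (pow_pos hnw_pos 2)
        | linarith only [hZnn]
    have h5 : nw ^ 2 / (4 * nw ^ 2) = 1 / 4 := by
      rw [div_eq_div_iff (mul_pos four_pos (pow_pos hnw_pos 2)).ne' four_pos.ne']
      ring
    linarith only [h1, h2, h3, h4, h5]
  set D : ℝ := 1 - c * S with hDdef
  have hD : (1 : ℝ) / 2 ≤ D := by
    rw [hDdef]
    nlinarith only [hcS, sq_nonneg (c * S - 1 / 2)]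
  have hDpos : 0 < D := lt_of_lt_of_le one_half_pos hD
  -- determinant of B
  have hdetB : Bm.det = A.det * D := by
    have h1 : Bm = A * (1 - c • vecMulVec (A⁻¹ *ᵥ σ') g) := by
      rw [Matrix.mul_sub, Matrix.mul_one, Matrix.mul_smul, mul_vecMulVec', hAcan, hBmdef]
    have h2 : (1 : Matrix (Fin s) (Fin s) ℝ) - c • vecMulVec (A⁻¹ *ᵥ σ') g
        = 1 + Matrix.replicateCol Unit ((-c) • (A⁻¹ *ᵥ σ')) * Matrix.replicateRow Unit g := by
      rw [← vecMulVec_eq, ← smul_vecMulVec', neg_smul, sub_eq_add_neg]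
    rw [h1, Matrix.det_mul, h2, Matrix.det_one_add_replicateCol_mul_replicateRow]
    congr 1
    rw [dotProduct_smul, smul_eq_mul, ← hSdef, hDdef]
    ring
  have hdetBu : IsUnit Bm.det := by
    rw [hdetB]
    exact isUnit_iff_ne_zero.mpr (mul_pos hpd.det_pos hDpos).ne'
  -- the scalar α and the vector u0
  set α : ℝ := c * (P - nw ^ 2) / D with hαdef
  set u0 : Fin s → ℝ := A⁻¹ *ᵥ (g + α • σ') with hu0def
  have hBu : Bm *ᵥ u0 = g - (c * nw ^ 2) • σ' := by
    rw [hBmdef, sub_mulVec, Matrix.smul_mulVec, vecMulVec_mulVec']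
    rw [hu0def, hAcan]
    have hgu0 : g ⬝ᵥ (A⁻¹ *ᵥ (g + α • σ')) = P + α * S := by
      rw [mulVec_add, mulVec_smul, dotProduct_add, dotProduct_smul, smul_eq_mul,
        ← hPdef, ← hSdef]
    rw [hgu0]
    have hscal : α - c * (P + α * S) = -(c * nw ^ 2) := by
      have hαD : α * D = c * (P - nw ^ 2) := by
        rw [hαdef]; field_simp
      rw [hDdef] at hαD
      linear_combination hαD
    have : c • ((P + α * S) • σ') = (c * (P + α * S)) • σ' := by rw [smul_smul]
    rw [this]
    have hcomb : g + α • σ' - (c * (P + α * S)) • σ' = g + (α - c * (P + α * S)) • σ' := by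
      rw [sub_smul]; abel
    rw [hcomb, hscal]
    rw [neg_smul, ← sub_eq_add_neg]
  have hu0 : Bm⁻¹ *ᵥ (g - (c * nw ^ 2) • σ') = u0 := by
    rw [← hBu, mulVec_mulVec, Matrix.nonsing_inv_mul _ hdetBu, one_mulVec]
  -- compute R *ᵥ w
  have hZw_eq : (WithLp.equiv 2 (Fin d → ℝ)) (mulVecE (Zmat M G) (mulVecE Mᵀ v)) = Zw := by
    rw [equiv_mulVecE, equiv_mulVecE, ← hv'def, ← hwdef]
    rw [Zmat, ← hAdef]
    rw [sub_mulVec, one_mulVec]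
    have h5 : (Mᵀ * G) *ᵥ (A⁻¹ *ᵥ ((Gᵀ * M) *ᵥ w)) = (Mᵀ * G * A⁻¹ * Gᵀ * M) *ᵥ w := by
      rw [mulVec_mulVec, mulVec_mulVec]
      congr 1
      simp [Matrix.mul_assoc]
    rw [← h5, hgw, hZwdef, hm'def]
  have hRw_eq : (WithLp.equiv 2 (Fin d → ℝ)) (mulVecE R (mulVecE Mᵀ v)) = Zw - α • y := by
    rw [equiv_mulVecE, equiv_mulVecE, ← hv'def, ← hwdef, hR, hR']
    rw [hBdef]
    rw [sub_mulVec, one_mulVec]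
    have h5 : (Mᵀ * G) *ᵥ (Bm⁻¹ *ᵥ (((G - c • vecMulVec v' σ')ᵀ * M) *ᵥ w))
        = (Mᵀ * G * Bm⁻¹ * (G - c • vecMulVec v' σ')ᵀ * M) *ᵥ w := by
      rw [mulVec_mulVec, mulVec_mulVec]
      congr 1
      simp [Matrix.mul_assoc]
    rw [← h5]
    have hinner : ((G - c • vecMulVec v' σ')ᵀ * M) *ᵥ w = g - (c * nw ^ 2) • σ' := by
      rw [Matrix.transpose_sub, Matrix.transpose_smul, vecMulVec_transpose']
      rw [Matrix.sub_mul, Matrix.smul_mul, vecMulVec_mul']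
      rw [sub_mulVec, Matrix.smul_mulVec, vecMulVec_mulVec']
      rw [hgw]
      rw [← hwdef, hww, smul_smul]
    rw [hinner, hu0]
    rw [hu0def, mulVec_add, mulVec_smul, mulVec_add, mulVec_smul]
    rw [← hm'def, ← hydef, hZwdef]
    abel
  -- norms
  have hNZ : ‖mulVecE (Zmat M G) (mulVecE Mᵀ v)‖ ^ 2 = nw ^ 2 - P := by
    rw [normE_sq, hZw_eq, hZZ]
  have hNR : ‖mulVecE R (mulVecE Mᵀ v)‖ ^ 2 = (nw ^ 2 - P) + α ^ 2 * q := by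
    have horth2 : y ⬝ᵥ Zw = 0 := by rw [dotProduct_comm]; exact horth
    rw [normE_sq, hRw_eq]
    simp only [sub_dotProduct, dotProduct_sub, smul_dotProduct, dotProduct_smul, smul_eq_mul]
    rw [hZZ, horth, horth2, hyy]
    ring
  -- final scalar inequalities
  have hαq_nonneg : 0 ≤ α ^ 2 * q := mul_nonneg (sq_nonneg α) hq_pos.le
  have hαD : α * D = c * (P - nw ^ 2) := by
    rw [hαdef]; field_simp
  have hc2 : c ^ 2 * nw ^ 2 = μ ^ 2 := by
    rw [hcdef]; field_simp
  have hkey : α ^ 2 * q * (4 * (nw ^ 2 * D ^ 2)) = (nw ^ 2 - P) ^ 2 := by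
    have h1 : α ^ 2 * D ^ 2 = c ^ 2 * (P - nw ^ 2) ^ 2 := by
      calc α ^ 2 * D ^ 2 = (α * D) ^ 2 := by ring
        _ = (c * (P - nw ^ 2)) ^ 2 := by rw [hαD]
        _ = c ^ 2 * (P - nw ^ 2) ^ 2 := by ring
    calc α ^ 2 * q * (4 * (nw ^ 2 * D ^ 2))
        = 4 * ((α ^ 2 * D ^ 2) * q * nw ^ 2) := by ring
      _ = 4 * (c ^ 2 * (P - nw ^ 2) ^ 2 * q * nw ^ 2) := by rw [h1]
      _ = 4 * ((c ^ 2 * nw ^ 2) * q * (P - nw ^ 2) ^ 2) := by ring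
      _ = 4 * (μ ^ 2 * q * (P - nw ^ 2) ^ 2) := by rw [hc2]
      _ = 4 * ((1 / 4) * (P - nw ^ 2) ^ 2) := by rw [hμ2q]
      _ = (nw ^ 2 - P) ^ 2 := by ring
  have h4pos : 0 < 4 * (nw ^ 2 * D ^ 2) :=
    mul_pos four_pos (mul_pos (pow_pos hnw_pos 2) (pow_pos hDpos 2))
  have hNZle : (nw ^ 2 - P) ^ 2 ≤ (nw ^ 2 - P) * (4 * (nw ^ 2 * D ^ 2)) := by
    have hDD : (1 / 2 : ℝ) * (1 / 2) ≤ D * D :=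
      mul_le_mul hD hD one_half_pos.le (le_trans one_half_pos.le hD)
    have hD2 : (1 : ℝ) ≤ 4 * D ^ 2 := by
      calc (1 : ℝ) = 4 * ((1 / 2) * (1 / 2)) := by norm_num
        _ ≤ 4 * (D * D) := by linarith only [hDD]
        _ = 4 * D ^ 2 := by ring
    have h1 : nw ^ 2 ≤ 4 * (nw ^ 2 * D ^ 2) := by
      calc nw ^ 2 = nw ^ 2 * 1 := by ring
        _ ≤ nw ^ 2 * (4 * D ^ 2) := mul_le_mul_of_nonneg_left hD2 (sq_nonneg nw)
        _ = 4 * (nw ^ 2 * D ^ 2) := by ring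
    calc (nw ^ 2 - P) ^ 2 = (nw ^ 2 - P) * (nw ^ 2 - P) := by ring
      _ ≤ (nw ^ 2 - P) * (nw ^ 2) := by
          apply mul_le_mul_of_nonneg_left _ hZnn
          linarith only [hPnn]
      _ ≤ (nw ^ 2 - P) * (4 * (nw ^ 2 * D ^ 2)) := mul_le_mul_of_nonneg_left h1 hZnn
  have hfinal : α ^ 2 * q ≤ nw ^ 2 - P := by
    have h6 : α ^ 2 * q * (4 * (nw ^ 2 * D ^ 2)) ≤ (nw ^ 2 - P) * (4 * (nw ^ 2 * D ^ 2)) := by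
      rw [hkey]; exact hNZle
    exact le_of_mul_le_mul_right h6 h4pos
  constructor
  · rw [hNZ, hNR]; linarith only [hαq_nonneg]
  · rw [hNZ, hNR]; linarith only [hfinal]
end

section
/- Let f : ℝⁿ → ℝ be differentiable with L-Lipschitz gradient (L ≥ 0). Let M be an n×d real matrix and G an n×s real matrix with GᵀMMᵀG positive definite. Fix x ∈ ℝⁿ with Mᵀ∇f(x) ≠ 0 and let σ ∈ ℝ^s be nonzero; set μ := 1/(2√(σᵀ(GᵀMMᵀG)⁻¹σ)), Z := I_d − MᵀG(GᵀMMᵀG)⁻¹GᵀM, R' := MᵀG·((G − μ·(∇f(x) σᵀ)/‖Mᵀ∇f(x)‖)ᵀMMᵀG)⁻¹·(G − μ·(∇f(x) σᵀ)/‖Mᵀ∇f(x)‖)ᵀM, and R := I_d − R'. Let ε > 0, α ≥ 0, and suppose ‖M R Mᵀ∇f(x)‖² ≤ ((1+ε)/n)·‖R Mᵀ∇f(x)‖². Then f(x − α·M R Mᵀ∇f(x)) ≤ f(x) − ((2/3)·α − α²·L·(1+ε)/n)·‖Z Mᵀ∇f(x)‖². -/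
open Matrix InnerProductSpace

set_option linter.unusedSectionVars false
set_option linter.unusedVariables false
set_option maxHeartbeats 1000000

section helpers
variable {m n' k : Type*} [Fintype m] [Fintype n'] [Fintype k]

variable {m n' k : Type*} [Fintype m] [Fintype n'] [Fintype k]

lemma vecMulVec_mul_mat (a : m → ℝ) (b : n' → ℝ) (D : Matrix n' k ℝ) :
    vecMulVec a b * D = vecMulVec a (b ᵥ* D) := by
  ext i j
  simp [Matrix.mul_apply, vecMulVec_apply, vecMul, dotProduct, Finset.mul_sum, mul_assoc]

lemma mat_mul_vecMulVec (D : Matrix k m ℝ) (a : m → ℝ) (b : n' → ℝ) :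
    D * vecMulVec a b = vecMulVec (D *ᵥ a) b := by
  ext i j
  simp only [Matrix.mul_apply, vecMulVec_apply, mulVec, dotProduct]
  rw [Finset.sum_mul]
  exact Finset.sum_congr rfl fun x _ => by ring

lemma vecMulVec_mulVec (a : m → ℝ) (b : n' → ℝ) (u : n' → ℝ) :
    vecMulVec a b *ᵥ u = (b ⬝ᵥ u) • a := by
  ext i
  simp [mulVec, vecMulVec_apply, dotProduct, Finset.mul_sum, mul_assoc, mul_comm, mul_left_comm]

lemma vecMul_vecMulVec (q : m → ℝ) (a : m → ℝ) (b : n' → ℝ) :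
    q ᵥ* vecMulVec a b = (q ⬝ᵥ a) • b := by
  ext j
  simp only [vecMul, vecMulVec_apply, dotProduct, Pi.smul_apply, smul_eq_mul]
  rw [Finset.sum_mul]
  exact Finset.sum_congr rfl fun i _ => by ring

lemma transpose_vecMulVec (a : m → ℝ) (b : n' → ℝ) :
    (vecMulVec a b)ᵀ = vecMulVec b a := by
  ext i j; simp [vecMulVec_apply, mul_comm]

lemma smul_vecMulVec (r : ℝ) (a : m → ℝ) (b : n' → ℝ) :
    r • vecMulVec a b = vecMulVec (r • a) b := by
  ext i j; simp [vecMulVec_apply]; ring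

lemma vecMulVec_smul_right (a : m → ℝ) (r : ℝ) (b : n' → ℝ) :
    vecMulVec a (r • b) = r • vecMulVec a b := by
  ext i j; simp [vecMulVec_apply]; ring

lemma dot_self_nonneg (a : m → ℝ) : 0 ≤ a ⬝ᵥ a :=
  Finset.sum_nonneg fun i _ => mul_self_nonneg _

lemma dot_mulVec_eq (D : Matrix m n' ℝ) (a : m → ℝ) (b : n' → ℝ) :
    a ⬝ᵥ (D *ᵥ b) = (Dᵀ *ᵥ a) ⬝ᵥ b := by
  rw [Matrix.dotProduct_mulVec, Matrix.mulVec_transpose]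

end helpers

open intervalIntegral in

lemma descent_lemma {E : Type*} [NormedAddCommGroup E] [InnerProductSpace ℝ E] [CompleteSpace E]
    (f : E → ℝ) (L : ℝ) (hL : 0 ≤ L) (hdiff : Differentiable ℝ f)
    (hlip : ∀ x y, ‖gradient f x - gradient f y‖ ≤ L * ‖x - y‖) (x y : E) :
    f y ≤ f x + ⟪gradient f x, y - x⟫_ℝ + L / 2 * ‖y - x‖ ^ 2 := by
  set h : E := y - x with hh
  set c : ℝ → E := fun t => x + t • h with hc
  have hgradlip : LipschitzWith (Real.toNNReal L) (gradient f) := by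
    apply LipschitzWith.of_dist_le_mul
    intro a b
    rw [dist_eq_norm, dist_eq_norm, Real.coe_toNNReal L hL]
    exact hlip a b
  have hccont : Continuous c := by
    exact continuous_const.add (continuous_id.smul continuous_const)
  have hcont : Continuous (fun t : ℝ => ⟪gradient f (c t), h⟫_ℝ) :=
    ((hgradlip.continuous.comp hccont).inner continuous_const)
  have hderiv : ∀ t : ℝ, HasDerivAt (fun t => f (c t)) ⟪gradient f (c t), h⟫_ℝ t := by
    intro t
    have h1 : HasDerivAt c h t := by
      have h2 : HasDerivAt (fun t : ℝ => t • h) ((1:ℝ) • h) t :=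
        (hasDerivAt_id t).smul_const h
      rw [one_smul] at h2
      exact h2.const_add x
    have h3 : HasFDerivAt f (toDual ℝ E (gradient f (c t))) (c t) :=
      hasGradientAt_iff_hasFDerivAt.mp (hdiff (c t)).hasGradientAt
    have h4 := h3.comp_hasDerivAt t h1
    simpa [toDual_apply_apply, Function.comp_def] using h4
  have hftc : ∫ t in (0:ℝ)..1, ⟪gradient f (c t), h⟫_ℝ = f (c 1) - f (c 0) :=
    integral_eq_sub_of_hasDerivAt (fun t _ => hderiv t) (hcont.intervalIntegrable 0 1)
  have hbound : ∀ t ∈ Set.Icc (0:ℝ) 1,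
      ⟪gradient f (c t), h⟫_ℝ ≤ ⟪gradient f x, h⟫_ℝ + (L * ‖h‖ ^ 2) * t := by
    intro t ht
    have h1 : ⟪gradient f (c t) - gradient f x, h⟫_ℝ
        ≤ ‖gradient f (c t) - gradient f x‖ * ‖h‖ := real_inner_le_norm _ _
    have h2 : ‖gradient f (c t) - gradient f x‖ ≤ L * (t * ‖h‖) := by
      have h5 := hlip (c t) x
      have : c t - x = t • h := by simp [hc]
      rw [this, norm_smul, Real.norm_eq_abs, abs_of_nonneg ht.1] at h5
      exact h5
    have h3 : ⟪gradient f (c t) - gradient f x, h⟫_ℝ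
        = ⟪gradient f (c t), h⟫_ℝ - ⟪gradient f x, h⟫_ℝ := inner_sub_left _ _ _
    nlinarith [norm_nonneg h, ht.1]
  have hintle : ∫ t in (0:ℝ)..1, ⟪gradient f (c t), h⟫_ℝ
      ≤ ∫ t in (0:ℝ)..1, (⟪gradient f x, h⟫_ℝ + (L * ‖h‖ ^ 2) * t) := by
    apply integral_mono_on zero_le_one (hcont.intervalIntegrable 0 1)
    · exact (continuous_const.add (continuous_const.mul continuous_id)).intervalIntegrable 0 1
    · exact hbound
  have hval : ∫ t in (0:ℝ)..1, (⟪gradient f x, h⟫_ℝ + (L * ‖h‖ ^ 2) * t)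
      = ⟪gradient f x, h⟫_ℝ + L / 2 * ‖h‖ ^ 2 := by
    rw [integral_add intervalIntegrable_const
      (intervalIntegrable_id.const_mul _), integral_const_mul, integral_id, integral_const]
    simp; ring
  have hc1 : c 1 = y := by simp [hc, hh]
  have hc0 : c 0 = x := by simp [hc]
  rw [hc1, hc0] at hftc
  linarith [hintle.trans_eq hval, hftc.symm.le, hftc.le]

lemma innerE {k : ℕ} (a b : EuclideanSpace ℝ (Fin k)) :
    ⟪a, b⟫_ℝ = (WithLp.equiv 2 (Fin k → ℝ) a) ⬝ᵥ (WithLp.equiv 2 (Fin k → ℝ) b) := by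
  simp only [PiLp.inner_apply, dotProduct, RCLike.inner_apply, conj_trivial]
  exact Finset.sum_congr rfl fun i _ => mul_comm _ _

lemma normE_sq_s16 {k : ℕ} (a : EuclideanSpace ℝ (Fin k)) :
    ‖a‖ ^ 2 = (WithLp.equiv 2 (Fin k → ℝ) a) ⬝ᵥ (WithLp.equiv 2 (Fin k → ℝ) a) := by
  rw [← real_inner_self_eq_norm_sq, innerE]

lemma mulVecE_apply {k l : ℕ} (A : Matrix (Fin k) (Fin l) ℝ) (v : EuclideanSpace ℝ (Fin l)) :
    (WithLp.equiv 2 (Fin k → ℝ)) (mulVecE A v) = A *ᵥ ((WithLp.equiv 2 (Fin l → ℝ)) v) := rfl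

lemma core {n d s : ℕ} (M : Matrix (Fin n) (Fin d) ℝ) (G : Matrix (Fin n) (Fin s) ℝ)
    (hpd : (Gᵀ * M * Mᵀ * G).PosDef) (g : Fin n → ℝ) (σp : Fin s → ℝ)
    (μ nv : ℝ) (hnvpos : 0 < nv)
    (hnv2 : nv ^ 2 = (Mᵀ *ᵥ g) ⬝ᵥ (Mᵀ *ᵥ g))
    (hμS : μ ^ 2 * (σp ⬝ᵥ ((Gᵀ * M * Mᵀ * G)⁻¹ *ᵥ σp)) = 1 / 4)
    (R' R : Matrix (Fin d) (Fin d) ℝ)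
    (hR' : R' = Mᵀ * G * ((G - (μ / nv) • vecMulVec g σp)ᵀ * M * Mᵀ * G)⁻¹ *
        (G - (μ / nv) • vecMulVec g σp)ᵀ * M)
    (hR : R = 1 - R') :
    2 / 3 * ((Zmat M G *ᵥ (Mᵀ *ᵥ g)) ⬝ᵥ (Zmat M G *ᵥ (Mᵀ *ᵥ g)))
        ≤ (Mᵀ *ᵥ g) ⬝ᵥ (R *ᵥ (Mᵀ *ᵥ g))
    ∧ (R *ᵥ (Mᵀ *ᵥ g)) ⬝ᵥ (R *ᵥ (Mᵀ *ᵥ g))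
        ≤ 2 * ((Zmat M G *ᵥ (Mᵀ *ᵥ g)) ⬝ᵥ (Zmat M G *ᵥ (Mᵀ *ᵥ g))) := by
  classical
  set A : Matrix (Fin s) (Fin s) ℝ := Gᵀ * M * Mᵀ * G with hA
  set v : Fin d → ℝ := Mᵀ *ᵥ g with hvdef
  -- invertibility and symmetry of A
  have hdet : IsUnit A.det := (Matrix.isUnit_iff_isUnit_det A).mp hpd.isUnit
  have hAAinv : A * A⁻¹ = 1 := Matrix.mul_nonsing_inv A hdet
  have hAT : Aᵀ = A := by
    have h1 := hpd.1
    rw [Matrix.IsHermitian] at h1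
    simpa using h1
  have hAiT : A⁻¹ᵀ = A⁻¹ := by rw [Matrix.transpose_nonsing_inv, hAT]
  have hsymm : ∀ (a b : Fin s → ℝ), a ⬝ᵥ (A⁻¹ *ᵥ b) = b ⬝ᵥ (A⁻¹ *ᵥ a) := by
    intro a b
    rw [dot_mulVec_eq, hAiT, dotProduct_comm]
  have hAmv : ∀ w : Fin s → ℝ, A *ᵥ (A⁻¹ *ᵥ w) = w := by
    intro w
    rw [Matrix.mulVec_mulVec, hAAinv, Matrix.one_mulVec]
  -- main vectors
  set q : Fin s → ℝ := (Gᵀ * M) *ᵥ v with hq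
  set ν : Fin s → ℝ := (μ / nv) • σp with hν
  set S : ℝ := σp ⬝ᵥ (A⁻¹ *ᵥ σp) with hS
  set τ : ℝ := ν ⬝ᵥ (A⁻¹ *ᵥ q) with hτ
  set c : ℝ := 1 - τ with hcdef
  set p : Fin d → ℝ := (Mᵀ * G) *ᵥ (A⁻¹ *ᵥ q) with hp
  set z : Fin d → ℝ := v - p with hz
  set u : Fin d → ℝ := (Mᵀ * G) *ᵥ (A⁻¹ *ᵥ ν) with hu
  set kk : ℝ := (A⁻¹ *ᵥ q) ⬝ᵥ q with hkk
  clear_value A v q ν S τ c p z u kk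
  -- structural identities
  have hGMMG : (Gᵀ * M) * (Mᵀ * G) = A := by rw [hA]; exact (Matrix.mul_assoc _ _ _).symm
  have hGMp : (Gᵀ * M) *ᵥ p = q := by
    rw [hp, Matrix.mulVec_mulVec (A⁻¹ *ᵥ q) (Gᵀ * M) (Mᵀ * G), hGMMG, hAmv]
  have hGMu : (Gᵀ * M) *ᵥ u = ν := by
    rw [hu, Matrix.mulVec_mulVec (A⁻¹ *ᵥ ν) (Gᵀ * M) (Mᵀ * G), hGMMG, hAmv]
  have hGMz : (Gᵀ * M) *ᵥ z = 0 := by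
    rw [hz, Matrix.mulVec_sub, hGMp, hq, sub_self]
  have hzu : z ⬝ᵥ u = 0 := by
    rw [hu, dot_mulVec_eq, Matrix.transpose_mul, Matrix.transpose_transpose, hGMz,
      zero_dotProduct]
  have hzp : z ⬝ᵥ p = 0 := by
    rw [hp, dot_mulVec_eq, Matrix.transpose_mul, Matrix.transpose_transpose, hGMz,
      zero_dotProduct]
  have hvu : v ⬝ᵥ u = τ := by
    rw [hu, dot_mulVec_eq, Matrix.transpose_mul, Matrix.transpose_transpose, ← hq, hsymm, ← hτ]
  have hvp : v ⬝ᵥ p = kk := by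
    rw [hp, dot_mulVec_eq, Matrix.transpose_mul, Matrix.transpose_transpose, ← hq,
      dotProduct_comm, ← hkk]
  have hvz : v ⬝ᵥ z = z ⬝ᵥ z := by
    have hv1 : v = z + p := by rw [hz]; ring
    nth_rewrite 1 [hv1]
    rw [add_dotProduct, dotProduct_comm p z, hzp, add_zero]
  have hvv : v ⬝ᵥ v = z ⬝ᵥ z + kk := by
    have hv1 : v = z + p := by rw [hz]; ring
    nth_rewrite 2 [hv1]
    rw [dotProduct_add, hvz, hvp]
  have hkknn : 0 ≤ kk := by
    have hpp : p ⬝ᵥ p = kk := by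
      nth_rewrite 2 [hp]
      rw [dot_mulVec_eq, Matrix.transpose_mul, Matrix.transpose_transpose, hGMp, hkk,
        dotProduct_comm]
    rw [← hpp]; exact dot_self_nonneg p
  have hzznn : 0 ≤ z ⬝ᵥ z := dot_self_nonneg z
  have huu : u ⬝ᵥ u = 1 / (4 * nv ^ 2) := by
    have h1 : u ⬝ᵥ u = ν ⬝ᵥ (A⁻¹ *ᵥ ν) := by
      nth_rewrite 2 [hu]
      rw [dot_mulVec_eq, Matrix.transpose_mul, Matrix.transpose_transpose, hGMu]
    have h2 : ν ⬝ᵥ (A⁻¹ *ᵥ ν) = (μ / nv) ^ 2 * S := by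
      rw [hν, Matrix.mulVec_smul, smul_dotProduct, dotProduct_smul, ← hS,
        smul_eq_mul, smul_eq_mul]
      ring
    have h3 : (μ / nv) ^ 2 * S = (μ ^ 2 * S) / nv ^ 2 := by
      rw [div_pow]; ring
    rw [h1, h2, h3, hμS]
    rw [div_div]
  -- Cauchy-Schwarz and bound on τ
  set D : ℝ := σp ⬝ᵥ (A⁻¹ *ᵥ q) with hD
  clear_value D
  have hCS : D ^ 2 ≤ S * kk := by
    have hquad : ∀ r : ℝ, 0 ≤ kk * (r * r) + (2 * D) * r + S := by
      intro r
      have h0 := hpd.inv.posSemidef.dotProduct_mulVec_nonneg (σp + r • q)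
      simp only [star_trivial] at h0
      simp only [Matrix.mulVec_add, Matrix.mulVec_smul, add_dotProduct,
        dotProduct_add, smul_dotProduct, dotProduct_smul,
        smul_eq_mul] at h0
      have hsy : q ⬝ᵥ (A⁻¹ *ᵥ σp) = D := by rw [hsymm q σp, hD]
      have hqq : q ⬝ᵥ (A⁻¹ *ᵥ q) = kk := by rw [hkk, dotProduct_comm]
      rw [hsy, hqq, ← hS, ← hD] at h0
      nlinarith [h0]
    have hdisc := discrim_le_zero hquad
    rw [discrim] at hdisc
    nlinarith [hdisc]
  have hτsq : τ ^ 2 ≤ 1 / 4 := by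
    have hτval : τ = (μ / nv) * D := by
      rw [hτ, hν, smul_dotProduct, smul_eq_mul, ← hD]
    have hkle : kk ≤ nv ^ 2 := by rw [hnv2, hvv]; linarith
    have hSnn : 0 ≤ S := by
      have h0 := hpd.inv.posSemidef.dotProduct_mulVec_nonneg σp
      simp only [star_trivial] at h0
      rw [hS]
      exact h0
    have h1 : τ ^ 2 * nv ^ 2 ≤ μ ^ 2 * (S * kk) := by
      have he : ((μ / nv) * D) ^ 2 * nv ^ 2 = μ ^ 2 * D ^ 2 := by
        field_simp
      rw [hτval, he]
      nlinarith [hCS, sq_nonneg μ]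
    have h2 : μ ^ 2 * (S * kk) ≤ (1 / 4) * nv ^ 2 := by
      have h3 : μ ^ 2 * (S * kk) = (μ ^ 2 * S) * kk := by ring
      rw [h3, hμS]
      linarith [hkle]
    nlinarith [h1, h2, mul_pos hnvpos hnvpos, sq_nonneg τ]
  have hchalf : 1 / 2 ≤ c := by
    rw [hcdef]
    nlinarith [hτsq, sq_nonneg (τ - 1/2), sq_nonneg (τ + 1/2)]
  have hc32 : c ≤ 3 / 2 := by
    rw [hcdef]
    nlinarith [hτsq, sq_nonneg (τ - 1/2), sq_nonneg (τ + 1/2)]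
  have hcpos : 0 < c := by linarith
  have hcne : c ≠ 0 := ne_of_gt hcpos
  have hcinv : c⁻¹ * c = 1 := inv_mul_cancel₀ hcne
  have h3 : c⁻¹ * (1 - τ) = 1 := by rw [← hcdef]; exact hcinv
  have hcinn : 0 ≤ c⁻¹ := inv_nonneg.mpr hcpos.le
  have hcinv23 : 2 / 3 ≤ c⁻¹ := by nlinarith [hcinv, hcpos, hc32, hcinn]
  have hcinv2 : c⁻¹ ≤ 2 := by nlinarith [hcinv, hcpos, hchalf, hcinn]
  -- the matrix B and Sherman–Morrison
  have hqw : ((g ᵥ* M) ᵥ* Mᵀ) ᵥ* G = q := by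
    rw [← Matrix.mulVec_transpose M g, Matrix.vecMul_transpose,
      ← Matrix.mulVec_transpose G, Matrix.mulVec_mulVec (Mᵀ *ᵥ g) Gᵀ M, ← hvdef, ← hq]
  have hBval : (G - (μ / nv) • vecMulVec g σp)ᵀ * M * Mᵀ * G = A - vecMulVec ν q := by
    have h1 : (G - (μ / nv) • vecMulVec g σp)ᵀ = Gᵀ - (μ / nv) • vecMulVec σp g := by
      rw [Matrix.transpose_sub, Matrix.transpose_smul, _root_.transpose_vecMulVec]
    rw [h1, Matrix.sub_mul, Matrix.sub_mul, Matrix.sub_mul, Matrix.smul_mul, Matrix.smul_mul,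
      Matrix.smul_mul, vecMulVec_mul_mat, vecMulVec_mul_mat, vecMulVec_mul_mat, hqw, ← hA,
      _root_.smul_vecMulVec, ← hν]
  set CC : Matrix (Fin s) (Fin s) ℝ :=
    A⁻¹ + c⁻¹ • vecMulVec (A⁻¹ *ᵥ ν) (A⁻¹ *ᵥ q) with hCC
  clear_value CC
  have hqA : q ᵥ* A⁻¹ = A⁻¹ *ᵥ q := by
    nth_rewrite 1 [← hAiT]
    rw [Matrix.vecMul_transpose]
  have hqν : q ⬝ᵥ (A⁻¹ *ᵥ ν) = τ := by rw [hsymm q ν, ← hτ]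
  have hBC : (A - vecMulVec ν q) * CC = 1 := by
    rw [hCC, Matrix.mul_add, Matrix.sub_mul, Matrix.sub_mul, hAAinv, Matrix.mul_smul,
      Matrix.mul_smul, mat_mul_vecMulVec, hAmv, vecMulVec_mul_mat, hqA,
      vecMulVec_mul_mat, _root_.vecMul_vecMulVec, hqν, vecMulVec_smul_right]
    have hc' : c⁻¹ = 1 + c⁻¹ * τ := by linear_combination h3
    nth_rewrite 1 [hc']
    rw [add_smul, one_smul, smul_smul]
    abel
  have hBinv : ((G - (μ / nv) • vecMulVec g σp)ᵀ * M * Mᵀ * G)⁻¹ = CC := by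
    rw [hBval]; exact Matrix.inv_eq_right_inv hBC
  rw [hBinv] at hR'
  -- computation of R' *ᵥ v
  have hMvv : g ⬝ᵥ (M *ᵥ v) = v ⬝ᵥ v := by rw [dot_mulVec_eq, ← hvdef]
  have hGtMv : (G - (μ / nv) • vecMulVec g σp)ᵀ *ᵥ (M *ᵥ v) = q - (v ⬝ᵥ v) • ν := by
    rw [Matrix.transpose_sub, Matrix.transpose_smul, _root_.transpose_vecMulVec, Matrix.sub_mulVec,
      Matrix.smul_mulVec, _root_.vecMulVec_mulVec, hMvv, Matrix.mulVec_mulVec v Gᵀ M, ← hq,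
      smul_smul, mul_comm (μ / nv) (v ⬝ᵥ v), ← smul_smul, ← hν]
  have hCq : CC *ᵥ q = (A⁻¹ *ᵥ q) + (c⁻¹ * kk) • (A⁻¹ *ᵥ ν) := by
    rw [hCC, Matrix.add_mulVec, Matrix.smul_mulVec, _root_.vecMulVec_mulVec, ← hkk, smul_smul]
  have hCν : CC *ᵥ ν = (A⁻¹ *ᵥ ν) + (c⁻¹ * τ) • (A⁻¹ *ᵥ ν) := by
    rw [hCC, Matrix.add_mulVec, Matrix.smul_mulVec, _root_.vecMulVec_mulVec,
      dotProduct_comm, ← hτ, smul_smul]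
  have hR'v : R' *ᵥ v
      = p + (c⁻¹ * kk) • u - ((v ⬝ᵥ v) • u + (v ⬝ᵥ v) • ((c⁻¹ * τ) • u)) := by
    rw [hR']
    rw [show (Mᵀ * G * CC * (G - (μ / nv) • vecMulVec g σp)ᵀ * M) *ᵥ v
        = (Mᵀ * G) *ᵥ (CC *ᵥ ((G - (μ / nv) • vecMulVec g σp)ᵀ *ᵥ (M *ᵥ v))) from by
      simp only [Matrix.mulVec_mulVec, Matrix.mul_assoc]]
    rw [hGtMv, Matrix.mulVec_sub, Matrix.mulVec_smul, hCq, hCν]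
    simp only [Matrix.mulVec_add, Matrix.mulVec_sub, Matrix.mulVec_smul]
    rw [← hp, ← hu]
    module
  -- computation of R *ᵥ v
  have hRv : R *ᵥ v = z + ((z ⬝ᵥ z) * c⁻¹) • u := by
    rw [hR, Matrix.sub_mulVec, Matrix.one_mulVec, hR'v]
    have hcoef : (v ⬝ᵥ v) + (v ⬝ᵥ v) * (c⁻¹ * τ) - c⁻¹ * kk = (z ⬝ᵥ z) * c⁻¹ := by
      linear_combination (1 + c⁻¹ * τ) * hvv - (z ⬝ᵥ z + kk) * h3
    rw [← hcoef, hz]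
    module
  have hZv : Zmat M G *ᵥ v = z := by
    simp only [Zmat]
    rw [← hA, Matrix.sub_mulVec, Matrix.one_mulVec, hz]
    congr 1
    rw [show (Mᵀ * G * A⁻¹ * Gᵀ * M) *ᵥ v = (Mᵀ * G) *ᵥ (A⁻¹ *ᵥ ((Gᵀ * M) *ᵥ v)) from by
      simp only [Matrix.mulVec_mulVec, Matrix.mul_assoc], ← hq, ← hp]
  -- conclusions
  clear hR hR' hA hvdef hq hν hS hτ hcdef hp hz hu hkk hD hCC hsymm hAmv hGMMG hGMp hGMu
    hGMz hqw hBval hqA hqν hBC hBinv hMvv hGtMv hCq hCν hR'v hμS hAAinv hAT hAiT hdet hpd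
  have huz : u ⬝ᵥ z = 0 := by rw [dotProduct_comm, hzu]
  have hvRv : v ⬝ᵥ (R *ᵥ v) = z ⬝ᵥ z + (z ⬝ᵥ z) * c⁻¹ * τ := by
    rw [hRv, dotProduct_add, dotProduct_smul, hvz, hvu, smul_eq_mul]
  have hRvRv : (R *ᵥ v) ⬝ᵥ (R *ᵥ v) = z ⬝ᵥ z + ((z ⬝ᵥ z) * c⁻¹) ^ 2 * (u ⬝ᵥ u) := by
    rw [hRv]
    simp only [add_dotProduct, dotProduct_add, smul_dotProduct,
      dotProduct_smul, smul_eq_mul, hzu, huz, mul_zero, add_zero, zero_add]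
    ring
  have h4 : c⁻¹ * τ = c⁻¹ - 1 := by linear_combination -h3
  rw [hZv]
  constructor
  · rw [hvRv]
    have h5 : (z ⬝ᵥ z) * (c⁻¹ * τ) = (z ⬝ᵥ z) * (c⁻¹ - 1) := by rw [h4]
    have h6 : 0 ≤ (z ⬝ᵥ z) * (c⁻¹ - 2 / 3) :=
      mul_nonneg hzznn (by linarith [hcinv23])
    linarith [h5, h6]
  · rw [hRvRv, huu]
    have hzle : z ⬝ᵥ z ≤ nv ^ 2 := by rw [hnv2, hvv]; linarith
    have huunn : (0 : ℝ) ≤ 1 / (4 * nv ^ 2) := by positivity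
    have h5 : ((z ⬝ᵥ z) * c⁻¹) ^ 2 ≤ 4 * ((z ⬝ᵥ z) * nv ^ 2) := by
      have hci2 : c⁻¹ ^ 2 ≤ 4 := by nlinarith [hcinv2, hcinn]
      have e1 : ((z ⬝ᵥ z) * c⁻¹) ^ 2 = (z ⬝ᵥ z) ^ 2 * c⁻¹ ^ 2 := by ring
      have e2 : (z ⬝ᵥ z) ^ 2 * c⁻¹ ^ 2 ≤ (z ⬝ᵥ z) ^ 2 * 4 := by
        nlinarith [sq_nonneg (z ⬝ᵥ z), hci2]
      have e3 : (z ⬝ᵥ z) ^ 2 * 4 ≤ 4 * ((z ⬝ᵥ z) * nv ^ 2) := by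
        nlinarith [mul_nonneg hzznn (sub_nonneg.mpr hzle)]
      linarith
    have h6 : ((z ⬝ᵥ z) * c⁻¹) ^ 2 * (1 / (4 * nv ^ 2)) ≤ z ⬝ᵥ z := by
      have h6' := mul_le_mul_of_nonneg_right h5 huunn
      have h7 : 4 * ((z ⬝ᵥ z) * nv ^ 2) * (1 / (4 * nv ^ 2)) = z ⬝ᵥ z := by
        have hnvne : nv ≠ 0 := ne_of_gt hnvpos
        field_simp
      linarith [h6', h7.le, h7.ge]
    linarith [h6]

theorem stmt16 {n d s : ℕ} (hn : 0 < n) (hd : 0 < d) (hs : 0 < s)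
    (f : EuclideanSpace ℝ (Fin n) → ℝ) (L : ℝ) (hL : 0 ≤ L)
    (hdiff : Differentiable ℝ f)
    (hlip : ∀ x y, ‖gradient f x - gradient f y‖ ≤ L * ‖x - y‖)
    (M : Matrix (Fin n) (Fin d) ℝ) (G : Matrix (Fin n) (Fin s) ℝ)
    (hpd : (Gᵀ * M * Mᵀ * G).PosDef)
    (x : EuclideanSpace ℝ (Fin n)) (hx : mulVecE Mᵀ (gradient f x) ≠ 0)
    (σ : EuclideanSpace ℝ (Fin s)) (hσ : σ ≠ 0)
    (μ : ℝ) (hμ : μ = 1 / (2 * Real.sqrt ⟪σ, mulVecE ((Gᵀ * M * Mᵀ * G)⁻¹) σ⟫_ℝ))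
    (R' : Matrix (Fin d) (Fin d) ℝ)
    (hR' : R' = Mᵀ * G *
        ((G - (μ / ‖mulVecE Mᵀ (gradient f x)‖) •
            vecMulVec ((WithLp.equiv 2 (Fin n → ℝ)) (gradient f x))
              ((WithLp.equiv 2 (Fin s → ℝ)) σ))ᵀ
          * M * Mᵀ * G)⁻¹ *
        (G - (μ / ‖mulVecE Mᵀ (gradient f x)‖) •
            vecMulVec ((WithLp.equiv 2 (Fin n → ℝ)) (gradient f x))
              ((WithLp.equiv 2 (Fin s → ℝ)) σ))ᵀ * M)
    (R : Matrix (Fin d) (Fin d) ℝ) (hR : R = 1 - R')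
    (ε α : ℝ) (hε : 0 < ε) (hα : 0 ≤ α)
    (hnorm : ‖mulVecE M (mulVecE R (mulVecE Mᵀ (gradient f x)))‖ ^ 2
        ≤ ((1 + ε) / n) * ‖mulVecE R (mulVecE Mᵀ (gradient f x))‖ ^ 2) :
    f (x - α • mulVecE M (mulVecE R (mulVecE Mᵀ (gradient f x))))
      ≤ f x - ((2 / 3) * α - α ^ 2 * L * (1 + ε) / n) *
          ‖mulVecE (Zmat M G) (mulVecE Mᵀ (gradient f x))‖ ^ 2 := by
  have hσp0 : (WithLp.equiv 2 (Fin s → ℝ)) σ ≠ 0 := by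
    intro h0
    apply hσ
    have h1 := congrArg (WithLp.equiv 2 (Fin s → ℝ)).symm h0
    simpa using h1
  have hnvpos : (0:ℝ) < ‖mulVecE Mᵀ (gradient f x)‖ := norm_pos_iff.mpr hx
  have hnv2 : ‖mulVecE Mᵀ (gradient f x)‖ ^ 2
      = (Mᵀ *ᵥ ((WithLp.equiv 2 (Fin n → ℝ)) (gradient f x))) ⬝ᵥ
        (Mᵀ *ᵥ ((WithLp.equiv 2 (Fin n → ℝ)) (gradient f x))) := by
    rw [normE_sq_s16, mulVecE_apply]
  have hSpos : 0 < ((WithLp.equiv 2 (Fin s → ℝ)) σ) ⬝ᵥ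
      ((Gᵀ * M * Mᵀ * G)⁻¹ *ᵥ ((WithLp.equiv 2 (Fin s → ℝ)) σ)) := by
    have h0 := hpd.inv.dotProduct_mulVec_pos hσp0
    simpa using h0
  have hμS : μ ^ 2 * (((WithLp.equiv 2 (Fin s → ℝ)) σ) ⬝ᵥ
      ((Gᵀ * M * Mᵀ * G)⁻¹ *ᵥ ((WithLp.equiv 2 (Fin s → ℝ)) σ))) = 1 / 4 := by
    have hinner : ⟪σ, mulVecE ((Gᵀ * M * Mᵀ * G)⁻¹) σ⟫_ℝ
        = ((WithLp.equiv 2 (Fin s → ℝ)) σ) ⬝ᵥ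
          ((Gᵀ * M * Mᵀ * G)⁻¹ *ᵥ ((WithLp.equiv 2 (Fin s → ℝ)) σ)) := by
      rw [innerE, mulVecE_apply]
    rw [hμ, hinner]
    generalize hSS : ((WithLp.equiv 2 (Fin s → ℝ)) σ) ⬝ᵥ
      ((Gᵀ * M * Mᵀ * G)⁻¹ *ᵥ ((WithLp.equiv 2 (Fin s → ℝ)) σ)) = S at hSpos ⊢
    have hs2 : Real.sqrt S ^ 2 = S := Real.sq_sqrt hSpos.le
    have hs3 : 0 < Real.sqrt S := Real.sqrt_pos.mpr hSpos
    field_simp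
    nlinarith [hs2, hs3]
  have key := core M G hpd ((WithLp.equiv 2 (Fin n → ℝ)) (gradient f x))
    ((WithLp.equiv 2 (Fin s → ℝ)) σ) μ ‖mulVecE Mᵀ (gradient f x)‖ hnvpos hnv2 hμS R' R hR' hR
  obtain ⟨k1, k2⟩ := key
  set w : EuclideanSpace ℝ (Fin n) := mulVecE M (mulVecE R (mulVecE Mᵀ (gradient f x))) with hw
  have hd := descent_lemma f L hL hdiff hlip x (x - α • w)
  have hyx : x - α • w - x = -(α • w) := by abel
  have hIPbase : ⟪gradient f x, w⟫_ℝ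
      = (Mᵀ *ᵥ ((WithLp.equiv 2 (Fin n → ℝ)) (gradient f x))) ⬝ᵥ
        (R *ᵥ (Mᵀ *ᵥ ((WithLp.equiv 2 (Fin n → ℝ)) (gradient f x)))) := by
    rw [hw, innerE, mulVecE_apply, mulVecE_apply, mulVecE_apply, dot_mulVec_eq]
  have hIP : ⟪gradient f x, x - α • w - x⟫_ℝ
      = -(α * ((Mᵀ *ᵥ ((WithLp.equiv 2 (Fin n → ℝ)) (gradient f x))) ⬝ᵥ
        (R *ᵥ (Mᵀ *ᵥ ((WithLp.equiv 2 (Fin n → ℝ)) (gradient f x)))))) := by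
    rw [hyx, inner_neg_right, real_inner_smul_right, hIPbase]
  have hNN : ‖x - α • w - x‖ ^ 2 = α ^ 2 * ‖w‖ ^ 2 := by
    rw [hyx, norm_neg, norm_smul, mul_pow, Real.norm_eq_abs, sq_abs]
  have hZn : ‖mulVecE (Zmat M G) (mulVecE Mᵀ (gradient f x))‖ ^ 2
      = (Zmat M G *ᵥ (Mᵀ *ᵥ ((WithLp.equiv 2 (Fin n → ℝ)) (gradient f x)))) ⬝ᵥ
        (Zmat M G *ᵥ (Mᵀ *ᵥ ((WithLp.equiv 2 (Fin n → ℝ)) (gradient f x)))) := by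
    rw [normE_sq_s16, mulVecE_apply, mulVecE_apply]
  have hRn : ‖mulVecE R (mulVecE Mᵀ (gradient f x))‖ ^ 2
      = (R *ᵥ (Mᵀ *ᵥ ((WithLp.equiv 2 (Fin n → ℝ)) (gradient f x)))) ⬝ᵥ
        (R *ᵥ (Mᵀ *ᵥ ((WithLp.equiv 2 (Fin n → ℝ)) (gradient f x)))) := by
    rw [normE_sq_s16, mulVecE_apply, mulVecE_apply]
  rw [hRn] at hnorm
  rw [hZn]
  have hZZnn : 0 ≤ (Zmat M G *ᵥ (Mᵀ *ᵥ ((WithLp.equiv 2 (Fin n → ℝ)) (gradient f x)))) ⬝ᵥ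
      (Zmat M G *ᵥ (Mᵀ *ᵥ ((WithLp.equiv 2 (Fin n → ℝ)) (gradient f x)))) :=
    dot_self_nonneg _
  have hLa : (0:ℝ) ≤ L / 2 * α ^ 2 := by positivity
  have hn' : (0:ℝ) < (n : ℝ) := Nat.cast_pos.mpr hn
  have hfrac : (0:ℝ) ≤ (1 + ε) / (n : ℝ) := by positivity
  have c1 := mul_le_mul_of_nonneg_left k1 hα
  have c2 := mul_le_mul_of_nonneg_left hnorm hLa
  have c3 := mul_le_mul_of_nonneg_left k2 hfrac
  have c4 := mul_le_mul_of_nonneg_left c3 hLa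
  rw [hIP, hNN] at hd
  set ZZ : ℝ := (Zmat M G *ᵥ (Mᵀ *ᵥ ((WithLp.equiv 2 (Fin n → ℝ)) (gradient f x)))) ⬝ᵥ
      (Zmat M G *ᵥ (Mᵀ *ᵥ ((WithLp.equiv 2 (Fin n → ℝ)) (gradient f x)))) with hZZ
  set IPv : ℝ := (Mᵀ *ᵥ ((WithLp.equiv 2 (Fin n → ℝ)) (gradient f x))) ⬝ᵥ
      (R *ᵥ (Mᵀ *ᵥ ((WithLp.equiv 2 (Fin n → ℝ)) (gradient f x)))) with hIPv
  set RRv : ℝ := (R *ᵥ (Mᵀ *ᵥ ((WithLp.equiv 2 (Fin n → ℝ)) (gradient f x)))) ⬝ᵥ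
      (R *ᵥ (Mᵀ *ᵥ ((WithLp.equiv 2 (Fin n → ℝ)) (gradient f x)))) with hRRv
  set W2 : ℝ := ‖w‖ ^ 2 with hW2
  clear_value ZZ IPv RRv W2
  have he : f x - (2 / 3 * α - α ^ 2 * L * (1 + ε) / n) * ZZ
      = f x - α * (2 / 3 * ZZ) + L / 2 * α ^ 2 * ((1 + ε) / n * (2 * ZZ)) := by
    ring
  rw [he]
  linarith [hd, c1, c2, c4]
end
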